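/- arXiv:2403.09943 — 2 statements merged into one kernel-verified Lean document; each statement's English description precedes it below -/
import Mathlib

section
/- Let P be a finite partially ordered set, let L ⊆ P be an antichain, and let 𝒞 be a finite multiset of chains of P such that every chain C ∈ 𝒞 contains exactly one element of L. For x ∈ P write c(x) for the number of chains in 𝒞 (counted with multiplicity) that contain x. Suppose there is a positive integer γ such that c(x) = γ for every x ∈ L and c(x) > γ for every x ∈ P \ L. Then every antichain A of P with |A| = |L| satisfies A = L; that is, L is the unique maximum antichain. -/
/-!
Double count the incidences between the chains of `𝒞` and an antichain `A`: a chain meets `A`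
at most once, so `∑_{x ∈ A} c(x) ≤ |𝒞|`, with equality for `L`, which every chain meets exactly
once. Hence `∑_{x ∈ A} c(x) ≤ |𝒞| = γ |L| = γ |A|`, while `c ≥ γ` everywhere with strict
inequality off `L`; so `A ⊆ L`, and `A = L` as the cardinalities agree.
-/

open Finset

namespace Multiset

variable {α : Type*} [DecidableEq α]

theorem sum_map_card_inter (𝒞 : Multiset (Finset α)) (A : Finset α) :
    (𝒞.map fun C => #(C ∩ A)).sum = ∑ x ∈ A, card (𝒞.filter (x ∈ ·)) := by
  induction 𝒞 using Multiset.induction with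
  | empty => simp
  | cons C s ih =>
    simp [filter_cons, apply_ite card, Finset.sum_add_distrib, ← ih,
      Finset.inter_comm]

theorem sum_card_filter_mem_le_card {r : α → α → Prop} (𝒞 : Multiset (Finset α))
    (h𝒞 : ∀ C ∈ 𝒞, IsChain r (C : Set α)) {A : Finset α} (hA : IsAntichain r (A : Set α)) :
    ∑ x ∈ A, card (𝒞.filter (x ∈ ·)) ≤ card 𝒞 := by
  rw [← sum_map_card_inter]
  refine (sum_le_card_nsmul _ 1 fun n hn => ?_).trans_eq (by simp)
  obtain ⟨C, hC, rfl⟩ := mem_map.1 hn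
  rw [card_le_one_iff_subsingleton, Finset.coe_inter]
  exact inter_subsingleton_of_isChain_of_isAntichain (h𝒞 C hC) hA

theorem sum_card_filter_mem_eq_card (𝒞 : Multiset (Finset α)) {L : Finset α}
    (hL : ∀ C ∈ 𝒞, #(C ∩ L) = 1) :
    ∑ x ∈ L, card (𝒞.filter (x ∈ ·)) = card 𝒞 := by
  rw [← sum_map_card_inter, map_congr rfl hL]
  simp

end Multiset

theorem stmt_1_general {α : Type*} [PartialOrder α] [DecidableEq α]
    (L : Finset α)
    (𝒞 : Multiset (Finset α))
    (hchain : ∀ C ∈ 𝒞, IsChain (· ≤ ·) (C : Set α))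
    (hone : ∀ C ∈ 𝒞, (C ∩ L).card = 1)
    (c : α → ℕ)
    (hc : ∀ x : α, c x = Multiset.card (𝒞.filter (fun C => x ∈ C)))
    (γ : ℕ)
    (hcL : ∀ x ∈ L, c x = γ)
    (hcout : ∀ x : α, x ∉ L → γ < c x)
    (A : Finset α) (hA : IsAntichain (· ≤ ·) (A : Set α))
    (hcard : A.card = L.card) :
    A = L := by
  have hsumA : ∑ x ∈ A, c x ≤ γ * #A := by
    calc ∑ x ∈ A, c x ≤ Multiset.card 𝒞 := by
          simpa only [hc] using Multiset.sum_card_filter_mem_le_card 𝒞 hchain hA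
      _ = ∑ x ∈ L, c x := by
          simpa only [hc] using (Multiset.sum_card_filter_mem_eq_card 𝒞 hone).symm
      _ = γ * #A := by rw [sum_congr rfl hcL, sum_const, smul_eq_mul, hcard, mul_comm]
  refine eq_of_subset_of_card_le (fun x hx => ?_) hcard.ge
  by_contra hxL
  have hγ_le : ∀ y ∈ A, γ ≤ c y := fun y _ =>
    if hy : y ∈ L then (hcL y hy).ge else (hcout y hy).le
  have hsumA_gt : γ * #A < ∑ y ∈ A, c y := by
    rw [mul_comm, ← smul_eq_mul, ← sum_const]
    exact sum_lt_sum hγ_le ⟨x, hx, hcout x hxL⟩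
  exact (hsumA_gt.trans_le hsumA).false

/-- If `L` is an antichain in a finite poset and `𝒞` is a finite multiset of chains,
each containing exactly one element of `L`, such that every element of `L` lies in
exactly `γ` chains (with multiplicity) and every element outside `L` lies in strictly
more than `γ` chains, then every antichain of size `|L|` equals `L`. -/
theorem stmt_1 {α : Type*} [Fintype α] [PartialOrder α] [DecidableEq α]
    (L : Finset α) (hL : IsAntichain (· ≤ ·) (L : Set α))
    (𝒞 : Multiset (Finset α))
    (hchain : ∀ C ∈ 𝒞, IsChain (· ≤ ·) (C : Set α))
    (hone : ∀ C ∈ 𝒞, (C ∩ L).card = 1)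
    (c : α → ℕ)
    (hc : ∀ x : α, c x = Multiset.card (𝒞.filter (fun C => x ∈ C)))
    (γ : ℕ) (hγ : 0 < γ)
    (hcL : ∀ x ∈ L, c x = γ)
    (hcout : ∀ x : α, x ∉ L → γ < c x)
    (A : Finset α) (hA : IsAntichain (· ≤ ·) (A : Set α))
    (hcard : A.card = L.card) :
    A = L :=
  stmt_1_general L 𝒞 hchain hone c hc γ hcL hcout A hA hcard
end

section
/- Let p, q, r be natural numbers with 2r ≤ p + q. Then every antichain A (with respect to set inclusion) contained in the ball B_r[p,q] satisfies |A| ≤ Σ_{l=0}^{⌊r/2⌋} max{ C(p,i)·C(q,j) : i + j = r − 2l }. That is, the width of B_r[p,q] is at most the sum of the widths of the spheres of radii r, r−2, r−4, …, each of which equals the size of that sphere's largest layer. -/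
/-!
Split `A` according to `l = ⌊(r - d(S)) / 2⌋`, where `d(S) = |P₀ \ S| + |S \ P₀|`, so that
the `l`-th part lies in the two adjacent spheres of radii `k = r - 2l` and `k - 1`. These
spheres are covered by the chain of layers `X_{k,0}, X_{k-1,0}, X_{k-1,1}, …, X_{0,k}`, each
obtained from the previous one by adding one element of `P₀` or one element outside `P₀`.
Consecutive layers form biregular bipartite graphs under inclusion, so they have the normalized
matching property, and the resulting LYM inequality `∑ |A ∩ L_m| / |L_m| ≤ 1` bounds an
antichain by the largest layer of the chain. Because `2k ≤ p + q`, unimodality of binomial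
coefficients dominates every layer of the sphere of radius `k - 1` by a neighbouring layer of
the sphere of radius `k`.
-/

open Finset

section Biregular

variable {α : Type*} [Preorder α] [DecidableLT α]

def IsBiregular (X Y : Finset α) (d u : ℕ) : Prop :=
  (∀ y ∈ Y, #{x ∈ X | x < y} = d) ∧ ∀ x ∈ X, #{y ∈ Y | x < y} = u

theorem IsBiregular.div_card_le_div_card {X Y B : Finset α} {d u : ℕ}
    (h : IsBiregular X Y d u) (hu : 0 < u) (hB : B ⊆ X) :
    (#B : ℚ) / #X ≤ #{y ∈ Y | ∃ b ∈ B, b < y} / #Y := by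
  set N := {y ∈ Y | ∃ b ∈ B, b < y}
  rcases Nat.eq_zero_or_pos #X with hX | hX
  · simp only [hX, Nat.cast_zero, div_zero]
    positivity
  have hedges : #X * u = #Y * d := card_mul_eq_card_mul (· < ·) h.2 h.1
  have hYd : 0 < #Y * d := hedges ▸ Nat.mul_pos hX hu
  have hcount : #B * u ≤ #N * d := by
    refine card_mul_le_card_mul (· < ·) (fun b hb => ?_) (fun y hy => ?_)
    · rw [← h.2 b (hB hb)]
      refine card_le_card fun y hy => ?_
      simp only [bipartiteAbove, N, mem_filter] at hy ⊢
      exact ⟨⟨hy.1, b, hb, hy.2⟩, hy.2⟩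
    · rw [← h.1 y (mem_filter.1 hy).1]
      exact card_le_card (filter_subset_filter _ hB)
  have key : #B * #Y ≤ #N * #X := by
    refine Nat.le_of_mul_le_mul_right ?_ (Nat.pos_of_mul_pos_left hYd)
    calc #B * #Y * d = #B * u * #X := by rw [mul_assoc, ← hedges]; ring
      _ ≤ #N * d * #X := by gcongr
      _ = #N * #X * d := by ring
  rw [div_le_div_iff₀ (by exact_mod_cast hX) (by exact_mod_cast Nat.pos_of_mul_pos_right hYd)]
  exact_mod_cast key

variable [DecidableEq α]

theorem IsAntichain.sum_card_inter_div_card_le_one {A : Finset α}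
    (hA : IsAntichain (· ≤ ·) (A : Set α)) {L : ℕ → Finset α} {T : ℕ}
    (hL : ∀ m < T, ∃ d u, 0 < u ∧ IsBiregular (L m) (L (m + 1)) d u) :
    ∑ m ∈ range (T + 1), (#(A ∩ L m) : ℚ) / #(L m) ≤ 1 := by
  have key : ∀ m ≤ T, ∃ B ⊆ L m, (∀ b ∈ B, ∃ a ∈ A, a ≤ b) ∧
      ∑ i ∈ range (m + 1), (#(A ∩ L i) : ℚ) / #(L i) ≤ #B / #(L m) := by
    intro m hm
    induction m with
    | zero =>
      exact ⟨A ∩ L 0, inter_subset_right, fun b hb => ⟨b, (mem_inter.1 hb).1, le_rfl⟩,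
        by simp⟩
    | succ m ih =>
      obtain ⟨B, hBL, hBA, hsum⟩ := ih (by omega)
      obtain ⟨d, u, hu, hbi⟩ := hL m (by omega)
      set N := {y ∈ L (m + 1) | ∃ b ∈ B, b < y}
      have hdisj : Disjoint (A ∩ L (m + 1)) N := by
        refine disjoint_left.2 fun y hyA hyN => ?_
        obtain ⟨b, hb, hby⟩ := (mem_filter.1 hyN).2
        obtain ⟨a, ha, hab⟩ := hBA b hb
        have hay := hab.trans_lt hby
        exact hA ha (mem_inter.1 hyA).1 hay.ne hay.le
      refine ⟨A ∩ L (m + 1) ∪ N, union_subset inter_subset_right (filter_subset _ _),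
        fun y hy => ?_, ?_⟩
      · rcases mem_union.1 hy with hy | hy
        · exact ⟨y, (mem_inter.1 hy).1, le_rfl⟩
        · obtain ⟨b, hb, hby⟩ := (mem_filter.1 hy).2
          obtain ⟨a, ha, hab⟩ := hBA b hb
          exact ⟨a, ha, hab.trans hby.le⟩
      · rw [sum_range_succ, card_union_of_disjoint hdisj, Nat.cast_add, add_div, add_comm]
        gcongr
        exact hsum.trans (hbi.div_card_le_div_card hu hBL)
  obtain ⟨B, hBL, -, hsum⟩ := key T le_rfl
  exact hsum.trans (div_le_one_of_le₀ (by exact_mod_cast card_le_card hBL) (by positivity))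

theorem IsAntichain.card_le_of_isBiregular_chain {A : Finset α}
    (hA : IsAntichain (· ≤ ·) (A : Set α)) {L : ℕ → Finset α} {T W : ℕ}
    (hL : ∀ m < T, ∃ d u, 0 < u ∧ IsBiregular (L m) (L (m + 1)) d u)
    (hcover : ∀ a ∈ A, ∃ m ≤ T, a ∈ L m) (hW : ∀ m ≤ T, #(L m) ≤ W) :
    #A ≤ W := by
  have hsplit : #A ≤ ∑ m ∈ range (T + 1), #(A ∩ L m) := by
    refine (card_le_card fun a ha => ?_).trans card_biUnion_le
    obtain ⟨m, hm, haL⟩ := hcover a ha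
    exact mem_biUnion.2 ⟨m, mem_range.2 (by omega), mem_inter.2 ⟨ha, haL⟩⟩
  have hterm : ∀ m ∈ range (T + 1), (#(A ∩ L m) : ℚ) ≤ #(A ∩ L m) / #(L m) * W := by
    intro m hm
    rcases Nat.eq_zero_or_pos #(L m) with h0 | hpos
    · simp [card_eq_zero.1 h0]
    rw [div_mul_eq_mul_div, le_div_iff₀ (by exact_mod_cast hpos)]
    gcongr
    exact hW m (by simpa [Nat.lt_succ_iff] using hm)
  have : (#A : ℚ) ≤ W := calc
    (#A : ℚ) ≤ ∑ m ∈ range (T + 1), (#(A ∩ L m) : ℚ) := by exact_mod_cast hsplit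
    _ ≤ (∑ m ∈ range (T + 1), (#(A ∩ L m) : ℚ) / #(L m)) * W := by
      rw [sum_mul]; exact sum_le_sum hterm
    _ ≤ W := mul_le_of_le_one_left (by positivity) (hA.sum_card_inter_div_card_le_one hL)
  exact_mod_cast this

end Biregular

section Layers

variable {α : Type*} [DecidableEq α]

theorem card_filter_lt_eq_of_insert {F : Finset (Finset α)} {z E : Finset α}
    (hF : ∀ z' ∈ F, #z' = #z + 1) (hE : ∀ e, e ∈ E ↔ e ∉ z ∧ insert e z ∈ F) :
    #{z' ∈ F | z < z'} = #E := by
  refine (card_bij (fun e _ => insert e z) (fun e he => ?_) (fun e₁ he₁ e₂ _ h => ?_)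
    (fun z' hz' => ?_)).symm
  · obtain ⟨hez, heF⟩ := (hE e).1 he
    exact mem_filter.2 ⟨heF, ssubset_insert hez⟩
  · exact (insert_inj ((hE e₁).1 he₁).1).1 h
  · obtain ⟨hz'F, hzz'⟩ := mem_filter.1 hz'
    obtain ⟨e, hez, rfl⟩ := exists_eq_insert_iff.2 ⟨hzz'.le, (hF z' hz'F).symm⟩
    exact ⟨e, (hE e).2 ⟨hez, hz'F⟩, rfl⟩

theorem card_filter_gt_eq_of_erase {F : Finset (Finset α)} {z' E : Finset α}
    (hF : ∀ z ∈ F, #z + 1 = #z') (hE : ∀ e, e ∈ E ↔ e ∈ z' ∧ z'.erase e ∈ F) :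
    #{z ∈ F | z < z'} = #E := by
  refine (card_bij (fun e _ => z'.erase e) (fun e he => ?_) (fun e₁ he₁ e₂ _ h => ?_)
    (fun z hz => ?_)).symm
  · obtain ⟨hez', heF⟩ := (hE e).1 he
    exact mem_filter.2 ⟨heF, erase_ssubset hez'⟩
  · exact (erase_inj z' ((hE e₁).1 he₁).1).1 h
  · obtain ⟨hzF, hzz'⟩ := mem_filter.1 hz
    obtain ⟨e, hez, rfl⟩ := exists_eq_insert_iff.2 ⟨hzz'.le, hF z hzF⟩
    refine ⟨e, (hE e).2 ⟨mem_insert_self e z, ?_⟩, ?_⟩ <;> rw [erase_insert hez]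
    exact hzF

/-- The paper's `X_{i,j}`, with `P₀ = P` inside the ground set `U = [p+q]`. -/
def layer (P U : Finset α) (i j : ℕ) : Finset (Finset α) :=
  {S ∈ U.powerset | #(P \ S) = i ∧ #(S \ P) = j}

variable {P U S : Finset α} {i j i' j' : ℕ} {e : α}

theorem mem_layer : S ∈ layer P U i j ↔ S ⊆ U ∧ #(P \ S) = i ∧ #(S \ P) = j := by
  simp [layer]

theorem card_layer (hPU : P ⊆ U) :
    #(layer P U i j) = (#P).choose i * (#(U \ P)).choose j := by
  have hrecover : ∀ a b, a ⊆ P → b ⊆ U \ P → P \ (P \ a ∪ b) = a ∧ (P \ a ∪ b) \ P = b := by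
    intro a b ha hb
    constructor <;> ext x <;> have := @ha x <;> have := @hb x <;>
      simp only [mem_sdiff, mem_union] at * <;> tauto
  rw [← card_powersetCard, ← card_powersetCard, ← card_product]
  refine card_nbij' (fun S => (P \ S, S \ P)) (fun ab => P \ ab.1 ∪ ab.2) ?_ ?_ ?_ ?_
  · intro S hS
    simp only [coe_product, Set.mem_prod, mem_coe, mem_powersetCard, mem_layer] at hS ⊢
    grind
  · rintro ⟨a, b⟩ hab
    simp only [coe_product, Set.mem_prod, mem_coe, mem_powersetCard, mem_layer] at hab ⊢
    rw [(hrecover a b hab.1.1 hab.2.1).1, (hrecover a b hab.1.1 hab.2.1).2]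
    grind
  · intro S hS
    simp only [mem_coe, mem_layer] at hS
    grind
  · rintro ⟨a, b⟩ hab
    simp only [coe_product, Set.mem_prod, mem_coe, mem_powersetCard] at hab
    simp only [hrecover a b hab.1.1 hab.2.1]

theorem card_add_eq_of_mem_layer (hS : S ∈ layer P U i j) : #S + i = #P + j := by
  obtain ⟨-, rfl, rfl⟩ := mem_layer.1 hS
  grind

theorem insert_mem_layer_iff (hS : S ∈ layer P U i j) (he : e ∉ S) :
    insert e S ∈ layer P U i' j' ↔
      e ∈ U ∧ (e ∈ P ∧ i' + 1 = i ∧ j' = j ∨ e ∉ P ∧ i' = i ∧ j' = j + 1) := by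
  obtain ⟨hSU, rfl, rfl⟩ := mem_layer.1 hS
  rw [mem_layer, insert_subset_iff]
  by_cases heP : e ∈ P
  · have hPS : e ∈ P \ S := mem_sdiff.2 ⟨heP, he⟩
    rw [sdiff_insert, insert_sdiff_of_mem _ heP, card_erase_of_mem hPS]
    have := card_pos.2 ⟨e, hPS⟩
    grind
  · rw [sdiff_insert_of_notMem heP, insert_sdiff_of_notMem _ heP,
      card_insert_of_notMem (fun h => he (mem_sdiff.1 h).1)]
    grind

theorem erase_mem_layer_iff (hS : S ∈ layer P U i j) (he : e ∈ S) :
    S.erase e ∈ layer P U i' j' ↔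
      (e ∈ P ∧ i' = i + 1 ∧ j' = j ∨ e ∉ P ∧ i' = i ∧ j' + 1 = j) := by
  obtain ⟨hSU, rfl, rfl⟩ := mem_layer.1 hS
  rw [mem_layer, erase_sdiff_comm]
  by_cases heP : e ∈ P
  · rw [sdiff_erase heP, card_insert_of_notMem (fun h => (mem_sdiff.1 h).2 he),
      erase_eq_of_notMem (fun h => (mem_sdiff.1 h).2 heP)]
    grind
  · have hSP : e ∈ S \ P := mem_sdiff.2 ⟨he, heP⟩
    have hPS : P \ S.erase e = P \ S := by
      ext x; simp only [mem_sdiff, mem_erase]; grind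
    rw [hPS, card_erase_of_mem hSP]
    have := card_pos.2 ⟨e, hSP⟩
    grind

theorem isBiregular_layer_succ_left (hPU : P ⊆ U) :
    IsBiregular (layer P U (i + 1) j) (layer P U i j) (#P - i) (i + 1) := by
  constructor
  · intro y hy
    rw [card_filter_gt_eq_of_erase (E := P ∩ y)]
    · have := card_inter_add_card_sdiff P y
      have := (mem_layer.1 hy).2.1
      omega
    · intro z hz
      have := card_add_eq_of_mem_layer hz
      have := card_add_eq_of_mem_layer hy
      omega
    · intro e
      by_cases he : e ∈ y
      · simp [he, erase_mem_layer_iff hy he]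
      · simp [he]
  · intro x hx
    rw [card_filter_lt_eq_of_insert (E := P \ x)]
    · exact (mem_layer.1 hx).2.1
    · intro z hz
      have := card_add_eq_of_mem_layer hz
      have := card_add_eq_of_mem_layer hx
      omega
    · intro e
      by_cases he : e ∈ x
      · simp [he]
      · simpa [he, insert_mem_layer_iff hx he] using @hPU e

theorem isBiregular_layer_succ_right :
    IsBiregular (layer P U i j) (layer P U i (j + 1)) (j + 1) (#(U \ P) - j) := by
  constructor
  · intro y hy
    rw [card_filter_gt_eq_of_erase (E := y \ P)]
    · exact (mem_layer.1 hy).2.2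
    · intro z hz
      have := card_add_eq_of_mem_layer hz
      have := card_add_eq_of_mem_layer hy
      omega
    · intro e
      by_cases he : e ∈ y
      · simp [he, erase_mem_layer_iff hy he]
      · simp [he]
  · intro x hx
    rw [card_filter_lt_eq_of_insert (E := (U \ P) \ x)]
    · obtain ⟨hxU, -, hxP⟩ := mem_layer.1 hx
      rw [card_sdiff, ← hxP]
      congr 2
      ext a
      simp only [mem_inter, mem_sdiff]
      grind
    · intro z hz
      have := card_add_eq_of_mem_layer hz
      have := card_add_eq_of_mem_layer hx
      omega
    · intro e
      by_cases he : e ∈ x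
      · simp [he]
      · simp [he, insert_mem_layer_iff hx he]

end Layers

theorem Nat.choose_le_choose_add_one_of_two_mul_lt {n r : ℕ} (h : 2 * r < n) :
    n.choose r ≤ n.choose (r + 1) := by
  refine Nat.le_of_mul_le_mul_right ?_ r.succ_pos
  rw [Nat.choose_succ_right_eq]
  exact Nat.mul_le_mul_left _ (by omega)

def maxLayerCard (p q k : ℕ) : ℕ :=
  (range (k + 1)).sup fun i => p.choose i * q.choose (k - i)

section MaxLayerCard

variable {p q i j k : ℕ}

theorem choose_mul_choose_le_maxLayerCard (h : i + j = k) :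
    p.choose i * q.choose j ≤ maxLayerCard p q k := by
  have := le_sup (f := fun i => p.choose i * q.choose (k - i))
    (mem_range.2 (by omega : i < k + 1))
  rwa [show k - i = j by omega] at this

theorem choose_mul_choose_le_maxLayerCard_of_add_one (h : i + j + 1 = k) (hk : 2 * k ≤ p + q) :
    p.choose i * q.choose j ≤ maxLayerCard p q k := by
  by_cases hi : 2 * i < p
  · calc p.choose i * q.choose j ≤ p.choose (i + 1) * q.choose j := by
          gcongr; exact Nat.choose_le_choose_add_one_of_two_mul_lt hi
      _ ≤ maxLayerCard p q k := choose_mul_choose_le_maxLayerCard (by omega)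
  · calc p.choose i * q.choose j ≤ p.choose i * q.choose (j + 1) := by
          gcongr; exact Nat.choose_le_choose_add_one_of_two_mul_lt (by omega)
      _ ≤ maxLayerCard p q k := choose_mul_choose_le_maxLayerCard (by omega)

end MaxLayerCard

theorem IsAntichain.card_le_maxLayerCard {α : Type*} [DecidableEq α] {P U : Finset α} {k : ℕ}
    (hPU : P ⊆ U) (hk : 2 * k ≤ #U) {A : Finset (Finset α)}
    (hA : IsAntichain (· ⊆ ·) (A : Set (Finset α)))
    (hAk : ∀ S ∈ A, S ⊆ U ∧ #(P \ S) + #(S \ P) ≤ k ∧ k ≤ #(P \ S) + #(S \ P) + 1) :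
    #A ≤ maxLayerCard #P #(U \ P) k := by
  have hU : #(U \ P) + #P = #U := card_sdiff_add_card_eq_card hPU
  set L : ℕ → Finset (Finset α) := fun m => layer P U (k - (m + 1) / 2) (m / 2)
  have hL : ∀ t, L (2 * t) = layer P U (k - t) t ∧ L (2 * t + 1) = layer P U (k - (t + 1)) t := by
    intro t
    constructor <;> simp only [L] <;> congr 2 <;> omega
  -- the chain stops before the layers with `j > #(U \ P)`, where the up-degree would vanish
  refine hA.card_le_of_isBiregular_chain (L := L) (T := min (2 * k) (2 * #(U \ P) + 1))
    (fun m hm => ?_) (fun S hS => ?_) (fun m hm => ?_)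
  · obtain ⟨t, rfl | rfl⟩ := Nat.even_or_odd' m
    · rw [(hL t).1, (hL t).2, show k - t = k - (t + 1) + 1 by omega]
      exact ⟨_, _, Nat.succ_pos _, isBiregular_layer_succ_left hPU⟩
    · rw [(hL t).2, show 2 * t + 1 + 1 = 2 * (t + 1) by ring, (hL (t + 1)).1]
      exact ⟨_, _, by omega, isBiregular_layer_succ_right⟩
  · obtain ⟨hSU, hlo, hhi⟩ := hAk S hS
    have hj : #(S \ P) ≤ #(U \ P) := card_le_card (sdiff_subset_sdiff hSU le_rfl)
    rcases (by omega : #(P \ S) + #(S \ P) = k ∨ #(P \ S) + #(S \ P) + 1 = k) with h | h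
    · exact ⟨2 * #(S \ P), by omega, (hL _).1 ▸ mem_layer.2 ⟨hSU, by omega, rfl⟩⟩
    · exact ⟨2 * #(S \ P) + 1, by omega, (hL _).2 ▸ mem_layer.2 ⟨hSU, by omega, rfl⟩⟩
  · obtain ⟨t, rfl | rfl⟩ := Nat.even_or_odd' m
    · rw [(hL t).1, card_layer hPU]
      exact choose_mul_choose_le_maxLayerCard (by omega)
    · rw [(hL t).2, card_layer hPU]
      exact choose_mul_choose_le_maxLayerCard_of_add_one (by omega) (by omega)

/-- For `2r ≤ p + q`, every antichain contained in the ball `B_r[p,q]` has size at most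
the sum of the widths of the spheres of radii `r, r-2, r-4, …`, where the width of the
sphere of radius `k` equals the size of its largest layer `max { C(p,i)*C(q,j) : i+j = k }`. -/
theorem stmt_9 (p q r : ℕ) (hr : 2 * r ≤ p + q)
    (A : Finset (Finset ℕ))
    (hA : ∀ x ∈ A, x ⊆ Finset.Icc 1 (p + q) ∧
      (Finset.Icc 1 p \ x).card + (x \ Finset.Icc 1 p).card ≤ r)
    (hanti : IsAntichain (· ⊆ ·) (A : Set (Finset ℕ))) :
    A.card ≤ ∑ l ∈ Finset.range (r / 2 + 1),
      (Finset.range (r - 2 * l + 1)).sup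
        (fun i => Nat.choose p i * Nat.choose q (r - 2 * l - i)) := by
  have hPU : Icc 1 p ⊆ Icc 1 (p + q) := Icc_subset_Icc_right (by omega)
  have hP : #(Icc 1 p) = p := by simp
  have hQ : #(Icc 1 (p + q) \ Icc 1 p) = q := by simp [card_sdiff_of_subset hPU]
  rw [card_eq_sum_card_fiberwise (t := range (r / 2 + 1))
    (f := fun S => (r - (#(Icc 1 p \ S) + #(S \ Icc 1 p))) / 2)
    fun S hS => mem_range.2 (by dsimp only; have := (hA S hS).2; omega)]
  refine sum_le_sum fun l _ => ?_
  calc _ ≤ maxLayerCard #(Icc 1 p) #(Icc 1 (p + q) \ Icc 1 p) (r - 2 * l) := by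
        refine (hanti.subset (coe_subset.2 (filter_subset _ _))).card_le_maxLayerCard hPU
          (by simp only [Nat.card_Icc]; omega) fun S hS => ?_
        obtain ⟨hSA, hSl⟩ := mem_filter.1 hS
        have := (hA S hSA).2
        exact ⟨(hA S hSA).1, by omega, by omega⟩
    _ = _ := by rw [hP, hQ]; rfl
end
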